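/- arXiv:2406.06514 — 6 statements merged into one kernel-verified Lean document; each statement's English description precedes it below -/
import Mathlib

section
/- Let (Ω, P) be a probability space and, for each i ∈ {1, …, m+1}, let θ_{i,1}, …, θ_{i,D} : Ω → ℝ^n be random vectors each with distribution μ_i, a Borel probability measure on ℝ^n. Let ψ_i(·)(ω) be the random Fourier basis built from θ_{i,1}(ω), …, θ_{i,D}(ω), let φ_c be the ADP compound basis of ψ_1, …, ψ_{m+1}, and define k_i(x,x') = ∫ cos(θᵀ(x − x')) dμ_i(θ). Then for all x, x' ∈ ℝ^n and u, u' ∈ ℝ^m, E[φ_c(x,u)ᵀ φ_c(x',u')] = k_c((x,u),(x',u')), where k_c is the ADP compound kernel of k_1, …, k_{m+1}. -/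
open Matrix MeasureTheory

/-- The random Fourier basis built from `D` weight vectors `θ 0, …, θ (D-1) ∈ ℝⁿ`:
`ψ(x) = (1/√D) (sin(θ₁ᵀx), cos(θ₁ᵀx), …, sin(θ_Dᵀx), cos(θ_Dᵀx)) ∈ ℝ^{2D}`. -/
noncomputable def rfBasis {n D : ℕ} (θ : Fin D → Fin n → ℝ) (x : Fin n → ℝ) :
    Fin D × Bool → ℝ := fun p =>
  (1 / Real.sqrt D) * (if p.2 then Real.cos (θ p.1 ⬝ᵥ x) else Real.sin (θ p.1 ⬝ᵥ x))

/-- The Affine Dot Product (ADP) compound basis of `ψ 0, …, ψ m`: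
`φ_c(x, u) = (u₁ ψ₁(x), …, u_m ψ_m(x), ψ_{m+1}(x)) ∈ ℝ^{(m+1)·|ι|}`. -/
def adpBasis {n m : ℕ} {ι : Type*} (ψ : Fin (m + 1) → (Fin n → ℝ) → ι → ℝ)
    (x : Fin n → ℝ) (u : Fin m → ℝ) : Fin (m + 1) × ι → ℝ :=
  fun p => Fin.snoc (α := fun _ => ℝ) u 1 p.1 * ψ p.1 x p.2

/-- The Affine Dot Product (ADP) compound kernel of `k 0, …, k m`:
`k_c((x,u),(x',u')) = ∑_{i=1}^m uᵢ uᵢ' kᵢ(x,x') + k_{m+1}(x,x')`. -/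
def adpKernel {n m : ℕ} (k : Fin (m + 1) → (Fin n → ℝ) → (Fin n → ℝ) → ℝ)
    (x x' : Fin n → ℝ) (u u' : Fin m → ℝ) : ℝ :=
  (∑ i : Fin m, u i * u' i * k i.castSucc x x') + k (Fin.last m) x x'

/-- the expectation of the dot product of ADP compound random Fourier
features equals the ADP compound kernel of the kernels `kᵢ(x,x') = ∫ cos(θᵀ(x-x')) dμᵢ(θ)`. -/
theorem stmt_1 {n m D : ℕ} (hD : 0 < D)
    {Ω : Type*} [MeasurableSpace Ω] (P : Measure Ω) [IsProbabilityMeasure P]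
    (θ : Fin (m + 1) → Fin D → Ω → (Fin n → ℝ))
    (μ : Fin (m + 1) → Measure (Fin n → ℝ))
    [∀ i, IsProbabilityMeasure (μ i)]
    (hmeas : ∀ i l, Measurable (θ i l))
    (hdist : ∀ i l, Measure.map (θ i l) P = μ i)
    (k : Fin (m + 1) → (Fin n → ℝ) → (Fin n → ℝ) → ℝ)
    (hk : ∀ i x x', k i x x' = ∫ t, Real.cos (t ⬝ᵥ (x - x')) ∂(μ i))
    (x x' : Fin n → ℝ) (u u' : Fin m → ℝ) :
    (∫ ω, adpBasis (fun i => rfBasis (fun l => θ i l ω)) x u ⬝ᵥ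
        adpBasis (fun i => rfBasis (fun l => θ i l ω)) x' u' ∂P)
      = adpKernel k x x' u u' := by
  set c : Fin (m+1) → ℝ := Fin.snoc (α := fun _ => ℝ) u 1 with hc
  set c' : Fin (m+1) → ℝ := Fin.snoc (α := fun _ => ℝ) u' 1 with hc'
  have hcosmeas : Measurable fun t : Fin n → ℝ => Real.cos (t ⬝ᵥ (x - x')) := by
    apply Real.measurable_cos.comp
    unfold dotProduct
    exact Finset.measurable_sum _ fun j _ => (measurable_pi_apply j).mul_const _
  have hf : ∀ i l, Measurable fun ω => Real.cos (θ i l ω ⬝ᵥ (x - x')) :=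
    fun i l => hcosmeas.comp (hmeas i l)
  have hint : ∀ i l, Integrable (fun ω => Real.cos (θ i l ω ⬝ᵥ (x - x'))) P := by
    intro i l
    refine (integrable_const (1:ℝ)).mono' (hf i l).aestronglyMeasurable ?_
    filter_upwards with ω using by simpa using Real.abs_cos_le_one _
  have key : ∀ ω : Ω,
      adpBasis (fun i => rfBasis (fun l => θ i l ω)) x u ⬝ᵥ
        adpBasis (fun i => rfBasis (fun l => θ i l ω)) x' u' =
      ∑ i : Fin (m+1), ∑ l : Fin D,
        c i * c' i * ((1 / (D:ℝ)) * Real.cos (θ i l ω ⬝ᵥ (x - x'))) := by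
    intro ω
    have hs : (1 / Real.sqrt D) * (1 / Real.sqrt D) = 1 / (D:ℝ) := by
      rw [div_mul_div_comm, one_mul, Real.mul_self_sqrt (by positivity)]
    simp only [adpBasis, rfBasis, dotProduct, Fintype.sum_prod_type]
    refine Finset.sum_congr rfl fun i _ => Finset.sum_congr rfl fun l _ => ?_
    rw [Fintype.sum_bool]
    have hsub : (∑ j : Fin n, θ i l ω j * (x - x') j)
        = (∑ j : Fin n, θ i l ω j * x j) - (∑ j : Fin n, θ i l ω j * x' j) := by
      simp [mul_sub, Finset.sum_sub_distrib]
    rw [hsub, Real.cos_sub]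
    norm_num
    have hD' : (Real.sqrt D)⁻¹ * (Real.sqrt D)⁻¹ = ((D:ℝ))⁻¹ := by
      rw [← mul_inv, Real.mul_self_sqrt (by positivity)]
    rw [← hD']
    ring
  calc (∫ ω, adpBasis (fun i => rfBasis (fun l => θ i l ω)) x u ⬝ᵥ
        adpBasis (fun i => rfBasis (fun l => θ i l ω)) x' u' ∂P)
      = ∑ i : Fin (m+1), ∑ l : Fin D,
          c i * c' i * ((1 / (D:ℝ)) * ∫ ω, Real.cos (θ i l ω ⬝ᵥ (x - x')) ∂P) := by
        rw [integral_congr_ae (Filter.Eventually.of_forall key)]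
        rw [integral_finset_sum _ fun i _ => integrable_finset_sum _ fun l _ =>
          (((hint i l).const_mul _).const_mul _)]
        refine Finset.sum_congr rfl fun i _ => ?_
        rw [integral_finset_sum _ fun l _ => ((hint i l).const_mul _).const_mul _]
        refine Finset.sum_congr rfl fun l _ => ?_
        rw [integral_const_mul, integral_const_mul]
    _ = ∑ i : Fin (m+1), c i * c' i * k i x x' := by
        refine Finset.sum_congr rfl fun i _ => ?_
        have h1 : ∀ l, (∫ ω, Real.cos (θ i l ω ⬝ᵥ (x - x')) ∂P) = k i x x' := by
          intro l
          rw [hk, ← hdist i l,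
            integral_map (hmeas i l).aemeasurable hcosmeas.aestronglyMeasurable]
        simp only [h1, Finset.sum_const, Finset.card_univ, Fintype.card_fin, nsmul_eq_mul]
        field_simp
    _ = adpKernel k x x' u u' := by
        rw [Fin.sum_univ_castSucc]
        simp only [adpKernel, hc, hc', Fin.snoc_castSucc, Fin.snoc_last, one_mul]
end

section
/- For each i ∈ {1, …, m+1}, suppose there exist a real inner product space H_i and a map φ_i : ℝ^n → H_i and a function κ_i : ℝ^n → ℝ such that ⟨φ_i(x), φ_i(x')⟩ = κ_i(x − x') for all x, x' ∈ ℝ^n (shift invariance), and κ_i(0) = 1 (normalization). Then the Affine Dense (AD) compound kernel k_d of κ_1, …, κ_{m+1} is a positive semidefinite kernel on ℝ^n × ℝ^m: k_d is symmetric, and for every finite collection of points (x_1,u_1), …, (x_N,u_N) ∈ ℝ^n × ℝ^m and coefficients c ∈ ℝ^N, ∑_{a,b=1}^N c_a c_b k_d((x_a,u_a),(x_b,u_b)) ≥ 0. -/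
open RealInnerProductSpace

/-- The Affine Dense (AD) compound kernel of `κ 0, …, κ m` (each a function of one
variable, evaluated at `x - x'` on the diagonal part):
writing `y = (u, 1)` and `y' = (u', 1)`,
`k_d((x,u),(x',u')) = ∑ᵢ yᵢ yᵢ' κᵢ(x - x') + ∑_{i ≠ j} yᵢ yⱼ' κᵢ(x) κⱼ(x')`. -/
def adKernel {n m : ℕ} (κ : Fin (m + 1) → (Fin n → ℝ) → ℝ)
    (x x' : Fin n → ℝ) (u u' : Fin m → ℝ) : ℝ :=
  (∑ i : Fin (m + 1),
      Fin.snoc (α := fun _ => ℝ) u 1 i * Fin.snoc (α := fun _ => ℝ) u' 1 i * κ i (x - x')) +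
    ∑ i : Fin (m + 1), ∑ j : Fin (m + 1),
      if i ≠ j then
        Fin.snoc (α := fun _ => ℝ) u 1 i * Fin.snoc (α := fun _ => ℝ) u' 1 j * κ i x * κ j x'
      else 0

lemma sum_ite_ne {m : ℕ} (i : Fin (m + 1)) (f : Fin (m + 1) → ℝ) :
    ∑ j, (if i ≠ j then f j else 0) = (∑ j, f j) - f i := by
  have h : ∀ j : Fin (m + 1), (if i ≠ j then f j else 0)
      = f j - (if j = i then f j else 0) := by
    intro j
    by_cases h : i = j <;> simp [h, Ne, eq_comm]
  rw [Finset.sum_congr rfl fun j _ => h j, Finset.sum_sub_distrib,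
    Finset.sum_ite_eq' Finset.univ i f]
  simp

/-- if each `κᵢ` is a normalized shift-invariant kernel function, i.e.
`κᵢ(x - x') = ⟪φᵢ(x), φᵢ(x')⟫` for some feature map `φᵢ` into a real inner product
space and `κᵢ(0) = 1`, then the Affine Dense compound kernel of `κ 0, …, κ m` is a
positive semidefinite kernel on `ℝⁿ × ℝᵐ`. -/
theorem stmt_2 {n m : ℕ} (κ : Fin (m + 1) → (Fin n → ℝ) → ℝ)
    (hκ : ∀ i, ∃ (H : Type) (instN : NormedAddCommGroup H)
        (instI : @InnerProductSpace ℝ H _ instN.toSeminormedAddCommGroup) (φ : (Fin n → ℝ) → H),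
        ∀ x x' : Fin n → ℝ, @inner ℝ H instI.toInner (φ x) (φ x') = κ i (x - x'))
    (hnorm : ∀ i, κ i 0 = 1) :
    (∀ (x x' : Fin n → ℝ) (u u' : Fin m → ℝ),
        adKernel κ x x' u u' = adKernel κ x' x u' u) ∧
      ∀ (N : ℕ) (xs : Fin N → Fin n → ℝ) (us : Fin N → Fin m → ℝ) (c : Fin N → ℝ),
        0 ≤ ∑ a, ∑ b, c a * c b * adKernel κ (xs a) (xs b) (us a) (us b) := by
  -- symmetry of each κ i
  have hsym : ∀ i (x x' : Fin n → ℝ), κ i (x - x') = κ i (x' - x) := by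
    intro i x x'
    obtain ⟨H, instN, instI, φ, h⟩ := hκ i
    rw [← h x x', ← h x' x, real_inner_comm]
  -- PSD of the centered diagonal part
  have hpsd : ∀ (i : Fin (m + 1)) (N : ℕ) (xs : Fin N → Fin n → ℝ) (d : Fin N → ℝ),
      0 ≤ ∑ a, ∑ b, d a * d b * (κ i (xs a - xs b) - κ i (xs a) * κ i (xs b)) := by
    intro i N xs d
    obtain ⟨H, instN, instI, φ, h⟩ := hκ i
    have hx : ∀ x : Fin n → ℝ, ⟪φ x, φ 0⟫ = κ i x := by
      intro x; rw [h x 0, sub_zero]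
    have h0 : ⟪φ (0 : Fin n → ℝ), φ 0⟫ = (1 : ℝ) := by
      rw [hx 0, hnorm i]
    set ψ : Fin N → H := fun a => φ (xs a) - κ i (xs a) • φ 0 with hψ
    have hinner : ∀ a b, ⟪ψ a, ψ b⟫ = κ i (xs a - xs b) - κ i (xs a) * κ i (xs b) := by
      intro a b
      simp only [hψ, inner_sub_left, inner_sub_right, real_inner_smul_left,
        real_inner_smul_right, h0, hx, h]
      rw [hsym i 0 (xs b), sub_zero]
      ring
    calc (0 : ℝ) ≤ ⟪∑ a, d a • ψ a, ∑ b, d b • ψ b⟫ := real_inner_self_nonneg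
      _ = ∑ a, ∑ b, d a * d b * (κ i (xs a - xs b) - κ i (xs a) * κ i (xs b)) := by
          rw [sum_inner]
          refine Finset.sum_congr rfl fun a _ => ?_
          rw [inner_sum]
          refine Finset.sum_congr rfl fun b _ => ?_
          rw [real_inner_smul_left, real_inner_smul_right, hinner]
          ring
  -- key decomposition of adKernel
  have key : ∀ (x x' : Fin n → ℝ) (u u' : Fin m → ℝ),
      adKernel κ x x' u u' =
        (∑ i, Fin.snoc (α := fun _ => ℝ) u 1 i * κ i x) *
          (∑ j, Fin.snoc (α := fun _ => ℝ) u' 1 j * κ j x') +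
        ∑ i, Fin.snoc (α := fun _ => ℝ) u 1 i * Fin.snoc (α := fun _ => ℝ) u' 1 i *
          (κ i (x - x') - κ i x * κ i x') := by
    intro x x' u u'
    unfold adKernel
    rw [Finset.sum_congr rfl (fun i _ => sum_ite_ne i
      (fun j => Fin.snoc (α := fun _ => ℝ) u 1 i * Fin.snoc (α := fun _ => ℝ) u' 1 j *
        κ i x * κ j x')), Finset.sum_sub_distrib, Finset.sum_mul_sum]
    have hS : ∑ i : Fin (m+1), ∑ j : Fin (m+1),
        Fin.snoc (α := fun _ => ℝ) u 1 i * Fin.snoc (α := fun _ => ℝ) u' 1 j * κ i x * κ j x'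
        = ∑ i : Fin (m+1), ∑ j : Fin (m+1),
          Fin.snoc (α := fun _ => ℝ) u 1 i * κ i x * (Fin.snoc (α := fun _ => ℝ) u' 1 j * κ j x') :=
      Finset.sum_congr rfl fun i _ => Finset.sum_congr rfl fun j _ => by ring
    have hE : (∑ i : Fin (m+1),
          Fin.snoc (α := fun _ => ℝ) u 1 i * Fin.snoc (α := fun _ => ℝ) u' 1 i * κ i (x - x'))
        - (∑ i : Fin (m+1),
          Fin.snoc (α := fun _ => ℝ) u 1 i * Fin.snoc (α := fun _ => ℝ) u' 1 i * κ i x * κ i x')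
        = ∑ i : Fin (m+1), Fin.snoc (α := fun _ => ℝ) u 1 i *
            Fin.snoc (α := fun _ => ℝ) u' 1 i * (κ i (x - x') - κ i x * κ i x') := by
      rw [← Finset.sum_sub_distrib]
      exact Finset.sum_congr rfl fun i _ => by ring
    linarith [hS, hE]
  constructor
  · intro x x' u u'
    rw [key, key]
    congr 1
    · rw [mul_comm]
    · exact Finset.sum_congr rfl fun i _ => by rw [hsym i x x']; ring
  · intro N xs us c
    have : ∑ a, ∑ b, c a * c b * adKernel κ (xs a) (xs b) (us a) (us b) =
        (∑ a, c a * ∑ i, Fin.snoc (α := fun _ => ℝ) (us a) 1 i * κ i (xs a)) ^ 2 +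
        ∑ i, ∑ a, ∑ b, (c a * Fin.snoc (α := fun _ => ℝ) (us a) 1 i) *
            (c b * Fin.snoc (α := fun _ => ℝ) (us b) 1 i) *
            (κ i (xs a - xs b) - κ i (xs a) * κ i (xs b)) := by
      rw [sq, Finset.sum_mul_sum]
      rw [Finset.sum_comm (γ := Fin (m+1))]
      rw [← Finset.sum_add_distrib]
      refine Finset.sum_congr rfl fun a _ => ?_
      rw [Finset.sum_comm (γ := Fin (m+1)), ← Finset.sum_add_distrib]
      refine Finset.sum_congr rfl fun b _ => ?_
      rw [key]
      have hQ : ∑ i : Fin (m+1), (c a * Fin.snoc (α := fun _ => ℝ) (us a) 1 i) *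
            (c b * Fin.snoc (α := fun _ => ℝ) (us b) 1 i) *
            (κ i (xs a - xs b) - κ i (xs a) * κ i (xs b))
          = c a * c b * ∑ i : Fin (m+1), Fin.snoc (α := fun _ => ℝ) (us a) 1 i *
              Fin.snoc (α := fun _ => ℝ) (us b) 1 i *
              (κ i (xs a - xs b) - κ i (xs a) * κ i (xs b)) := by
        rw [Finset.mul_sum]
        exact Finset.sum_congr rfl fun i _ => by ring
      rw [hQ]
      ring
    rw [this]
    have h1 : (0:ℝ) ≤ (∑ a, c a * ∑ i, Fin.snoc (α := fun _ => ℝ) (us a) 1 i * κ i (xs a)) ^ 2 :=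
      sq_nonneg _
    have h2 : (0:ℝ) ≤ ∑ i : Fin (m+1), ∑ a, ∑ b,
        (c a * Fin.snoc (α := fun _ => ℝ) (us a) 1 i) *
          (c b * Fin.snoc (α := fun _ => ℝ) (us b) 1 i) *
          (κ i (xs a - xs b) - κ i (xs a) * κ i (xs b)) :=
      Finset.sum_nonneg fun i _ =>
        hpsd i N xs (fun a => c a * Fin.snoc (α := fun _ => ℝ) (us a) 1 i)
    linarith
end

section
/- Let (Ω, P) be a probability space and, for each i ∈ {1, …, m+1}, let θ_{i,1}, …, θ_{i,D} : Ω → ℝ^n be random vectors each with distribution μ_i, a Borel probability measure on ℝ^n that is symmetric (invariant under θ ↦ −θ). Assume that for all i ≠ j and all l, the random vectors θ_{i,l} and θ_{j,l} are independent. Let ψ_i(·)(ω) be the random Fourier basis built from θ_{i,1}(ω), …, θ_{i,D}(ω), let φ_d be the AD compound basis of ψ_1, …, ψ_{m+1}, and define κ_i(v) = ∫ cos(θᵀv) dμ_i(θ). Then for all x, x' ∈ ℝ^n and u, u' ∈ ℝ^m, E[φ_d(x,u)ᵀ φ_d(x',u')] = k_d((x,u),(x',u')), where k_d is the AD compound kernel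 of κ_1, …, κ_{m+1}. -/
/-!
Expanding both compound features bilinearly, `E[φ_d(x,u)ᵀ φ_d(x',u')] = ∑_{i,j} yᵢ y'ⱼ E[ψᵢ(x)ᵀ ψⱼ(x')]`,
and `ψᵢ(x)ᵀ ψⱼ(x')` is the average over `l` of `cos(θᵢₗᵀx − θⱼₗᵀx')`. For `i = j` this is
`cos(θᵢₗᵀ(x − x'))`, whose expectation is `κᵢ(x − x')`. For `i ≠ j`, writing
`cos(a − b) = cos a cos b + sin a sin b`, independence factors each product of expectations, and
the sine expectations vanish because `μᵢ` is symmetric, leaving `κᵢ(x) κⱼ(x')`.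
-/

open Matrix MeasureTheory

/-- The Affine Dense (AD) compound basis of `ψ 0, …, ψ m`:
`φ_d(x, u) = ∑_{i=1}^m uᵢ ψᵢ(x) + ψ_{m+1}(x)`. -/
def adBasis {n m : ℕ} {ι : Type*} (ψ : Fin (m + 1) → (Fin n → ℝ) → ι → ℝ)
    (x : Fin n → ℝ) (u : Fin m → ℝ) : ι → ℝ :=
  (∑ i : Fin m, u i • ψ i.castSucc x) + ψ (Fin.last m) x

open ProbabilityTheory

lemma adBasis_eq_sum_snoc {n m : ℕ} {ι : Type*} (ψ : Fin (m + 1) → (Fin n → ℝ) → ι → ℝ)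
    (x : Fin n → ℝ) (u : Fin m → ℝ) :
    adBasis ψ x u = ∑ i, Fin.snoc (α := fun _ => ℝ) u 1 i • ψ i x := by
  simp [adBasis, Fin.sum_univ_castSucc]

lemma adBasis_dotProduct_adBasis {n m : ℕ} {ι : Type*} [Fintype ι]
    (ψ χ : Fin (m + 1) → (Fin n → ℝ) → ι → ℝ) (x x' : Fin n → ℝ) (u u' : Fin m → ℝ) :
    adBasis ψ x u ⬝ᵥ adBasis χ x' u' =
      ∑ i, ∑ j, Fin.snoc (α := fun _ => ℝ) u 1 i * Fin.snoc (α := fun _ => ℝ) u' 1 j *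
        (ψ i x ⬝ᵥ χ j x') := by
  simp only [adBasis_eq_sum_snoc, sum_dotProduct, dotProduct_sum, smul_dotProduct,
    dotProduct_smul, smul_eq_mul, Finset.mul_sum]
  rw [Finset.sum_comm]
  exact Finset.sum_congr rfl fun _ _ => Finset.sum_congr rfl fun _ _ => by ring

lemma adKernel_eq_sum {n m : ℕ} (κ : Fin (m + 1) → (Fin n → ℝ) → ℝ)
    (x x' : Fin n → ℝ) (u u' : Fin m → ℝ) :
    adKernel κ x x' u u' =
      ∑ i, ∑ j, Fin.snoc (α := fun _ => ℝ) u 1 i * Fin.snoc (α := fun _ => ℝ) u' 1 j *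
        (if i = j then κ i (x - x') else κ i x * κ j x') := by
  rw [adKernel]
  set y : Fin (m + 1) → ℝ := Fin.snoc (α := fun _ => ℝ) u 1
  set y' : Fin (m + 1) → ℝ := Fin.snoc (α := fun _ => ℝ) u' 1
  have hsplit i j : y i * y' j * (if i = j then κ i (x - x') else κ i x * κ j x') =
      (if i = j then y i * y' i * κ i (x - x') else 0) +
        (if i ≠ j then y i * y' j * κ i x * κ j x' else 0) := by
    split_ifs <;> simp_all [mul_assoc]
  simp only [hsplit, Finset.sum_add_distrib, Finset.sum_ite_eq, Finset.mem_univ, if_true]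

lemma rfBasis_dotProduct_rfBasis {n D : ℕ} (a b : Fin D → Fin n → ℝ) (x x' : Fin n → ℝ) :
    rfBasis a x ⬝ᵥ rfBasis b x' = (∑ l, Real.cos (a l ⬝ᵥ x - b l ⬝ᵥ x')) / D := by
  have hD : 1 / Real.sqrt D * (1 / Real.sqrt D) = 1 / (D : ℝ) := by
    rw [div_mul_div_comm, one_mul, Real.mul_self_sqrt D.cast_nonneg]
  simp only [dotProduct, rfBasis, Fintype.sum_prod_type, Fintype.sum_bool, if_true,
    Bool.false_eq_true, if_false, Real.cos_sub, Finset.sum_div]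
  refine Finset.sum_congr rfl fun l _ => ?_
  rw [div_eq_mul_one_div _ (D : ℝ), ← hD]
  ring

section Expectation

variable {Ω : Type*} [MeasurableSpace Ω] {P : Measure Ω} [IsFiniteMeasure P]

lemma integrable_cos_comp {X : Ω → ℝ} (hX : AEMeasurable X P) :
    Integrable (fun ω => Real.cos (X ω)) P :=
  .of_bound (Real.continuous_cos.comp_aestronglyMeasurable hX.aestronglyMeasurable) 1
    (ae_of_all _ fun _ => Real.abs_cos_le_one _)

lemma integrable_sin_comp {X : Ω → ℝ} (hX : AEMeasurable X P) :
    Integrable (fun ω => Real.sin (X ω)) P :=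
  .of_bound (Real.continuous_sin.comp_aestronglyMeasurable hX.aestronglyMeasurable) 1
    (ae_of_all _ fun _ => Real.abs_sin_le_one _)

lemma integral_cos_sub_of_indepFun {X Y : Ω → ℝ} (hX : AEMeasurable X P) (hY : AEMeasurable Y P)
    (hXY : IndepFun X Y P) :
    ∫ ω, Real.cos (X ω - Y ω) ∂P =
      (∫ ω, Real.cos (X ω) ∂P) * (∫ ω, Real.cos (Y ω) ∂P) +
        (∫ ω, Real.sin (X ω) ∂P) * (∫ ω, Real.sin (Y ω) ∂P) := by
  have hcos : IndepFun (fun ω => Real.cos (X ω)) (fun ω => Real.cos (Y ω)) P :=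
    hXY.comp Real.measurable_cos Real.measurable_cos
  have hsin : IndepFun (fun ω => Real.sin (X ω)) (fun ω => Real.sin (Y ω)) P :=
    hXY.comp Real.measurable_sin Real.measurable_sin
  have hcc : Integrable (fun ω => Real.cos (X ω) * Real.cos (Y ω)) P :=
    hcos.integrable_mul (integrable_cos_comp hX) (integrable_cos_comp hY)
  have hss : Integrable (fun ω => Real.sin (X ω) * Real.sin (Y ω)) P :=
    hsin.integrable_mul (integrable_sin_comp hX) (integrable_sin_comp hY)
  simp only [Real.cos_sub]
  rw [integral_add hcc hss,
    hcos.integral_fun_mul_eq_mul_integral (integrable_cos_comp hX).1 (integrable_cos_comp hY).1,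
    hsin.integral_fun_mul_eq_mul_integral (integrable_sin_comp hX).1 (integrable_sin_comp hY).1]

end Expectation

lemma integral_sin_dotProduct_eq_zero {n : ℕ} (μ : Measure (Fin n → ℝ)) [μ.IsNegInvariant]
    (v : Fin n → ℝ) : ∫ t, Real.sin (t ⬝ᵥ v) ∂μ = 0 := by
  have h := integral_neg_eq_self (fun t => Real.sin (t ⬝ᵥ v)) μ
  simp only [neg_dotProduct, Real.sin_neg, integral_neg] at h
  linarith

section RandomFeatures

variable {Ω : Type*} [MeasurableSpace Ω] {P : Measure Ω} [IsFiniteMeasure P] {n D : ℕ}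
  {ϑ η : Fin D → Ω → Fin n → ℝ} {μ ν : Measure (Fin n → ℝ)}

lemma integrable_cos_dotProduct_sub (hϑ : ∀ l, AEMeasurable (ϑ l) P)
    (hη : ∀ l, AEMeasurable (η l) P) (x x' : Fin n → ℝ) (l : Fin D) :
    Integrable (fun ω => Real.cos (ϑ l ω ⬝ᵥ x - η l ω ⬝ᵥ x')) P :=
  integrable_cos_comp (by fun_prop)

lemma integrable_rfBasis_dotProduct_rfBasis (hϑ : ∀ l, AEMeasurable (ϑ l) P)
    (hη : ∀ l, AEMeasurable (η l) P) (x x' : Fin n → ℝ) :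
    Integrable (fun ω => rfBasis (ϑ · ω) x ⬝ᵥ rfBasis (η · ω) x') P := by
  simp only [rfBasis_dotProduct_rfBasis]
  exact (integrable_finsetSum _ fun l _ =>
    integrable_cos_dotProduct_sub hϑ hη x x' l).div_const _

lemma integral_rfBasis_dotProduct_rfBasis (hD : 0 < D) (hϑ : ∀ l, AEMeasurable (ϑ l) P)
    (hη : ∀ l, AEMeasurable (η l) P) (x x' : Fin n → ℝ) {c : ℝ}
    (hc : ∀ l, ∫ ω, Real.cos (ϑ l ω ⬝ᵥ x - η l ω ⬝ᵥ x') ∂P = c) :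
    ∫ ω, rfBasis (ϑ · ω) x ⬝ᵥ rfBasis (η · ω) x' ∂P = c := by
  simp only [rfBasis_dotProduct_rfBasis]
  rw [integral_div, integral_finsetSum _ fun l _ => integrable_cos_dotProduct_sub hϑ hη x x' l]
  simp only [hc, Finset.sum_const, Finset.card_univ, Fintype.card_fin, nsmul_eq_mul]
  field_simp

lemma integral_rfBasis_dotProduct_rfBasis_self (hD : 0 < D) (hϑ : ∀ l, HasLaw (ϑ l) μ P)
    (x x' : Fin n → ℝ) :
    ∫ ω, rfBasis (ϑ · ω) x ⬝ᵥ rfBasis (ϑ · ω) x' ∂P = ∫ t, Real.cos (t ⬝ᵥ (x - x')) ∂μ := by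
  have hmeas l := (hϑ l).aemeasurable
  refine integral_rfBasis_dotProduct_rfBasis hD hmeas hmeas x x' fun l => ?_
  simp only [← dotProduct_sub]
  exact (hϑ l).integral_comp (f := fun t => Real.cos (t ⬝ᵥ (x - x')))
    (by fun_prop : Continuous _).aestronglyMeasurable

lemma integral_rfBasis_dotProduct_rfBasis_of_indepFun (hD : 0 < D) [μ.IsNegInvariant]
    (hϑ : ∀ l, HasLaw (ϑ l) μ P) (hη : ∀ l, HasLaw (η l) ν P)
    (hϑη : ∀ l, IndepFun (ϑ l) (η l) P) (x x' : Fin n → ℝ) :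
    ∫ ω, rfBasis (ϑ · ω) x ⬝ᵥ rfBasis (η · ω) x' ∂P =
      (∫ t, Real.cos (t ⬝ᵥ x) ∂μ) * ∫ t, Real.cos (t ⬝ᵥ x') ∂ν := by
  refine integral_rfBasis_dotProduct_rfBasis hD (fun l => (hϑ l).aemeasurable)
    (fun l => (hη l).aemeasurable) x x' fun l => ?_
  have hlaw {X : Ω → Fin n → ℝ} {ρ : Measure (Fin n → ℝ)} (hX : HasLaw X ρ P)
      {f : (Fin n → ℝ) → ℝ} (hf : Continuous f) : ∫ ω, f (X ω) ∂P = ∫ t, f t ∂ρ :=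
    hX.integral_comp hf.aestronglyMeasurable
  have hind : IndepFun (fun ω => ϑ l ω ⬝ᵥ x) (fun ω => η l ω ⬝ᵥ x') P :=
    (hϑη l).comp (by fun_prop : Measurable (· ⬝ᵥ x)) (by fun_prop : Measurable (· ⬝ᵥ x'))
  have hmeas := (hϑ l).aemeasurable
  have hmeas' := (hη l).aemeasurable
  rw [integral_cos_sub_of_indepFun (by fun_prop) (by fun_prop) hind,
    hlaw (hϑ l) (f := fun t => Real.cos (t ⬝ᵥ x)) (by fun_prop),
    hlaw (hη l) (f := fun t => Real.cos (t ⬝ᵥ x')) (by fun_prop),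
    hlaw (hϑ l) (f := fun t => Real.sin (t ⬝ᵥ x)) (by fun_prop),
    integral_sin_dotProduct_eq_zero, zero_mul, add_zero]

end RandomFeatures

lemma integral_adBasis_dotProduct_adBasis {Ω : Type*} [MeasurableSpace Ω] {P : Measure Ω}
    {n m : ℕ} {ι : Type*} [Fintype ι] (ψ χ : Ω → Fin (m + 1) → (Fin n → ℝ) → ι → ℝ)
    (x x' : Fin n → ℝ) (u u' : Fin m → ℝ)
    (hψχ : ∀ i j, Integrable (fun ω => ψ ω i x ⬝ᵥ χ ω j x') P) :
    ∫ ω, adBasis (ψ ω) x u ⬝ᵥ adBasis (χ ω) x' u' ∂P =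
      ∑ i, ∑ j, Fin.snoc (α := fun _ => ℝ) u 1 i * Fin.snoc (α := fun _ => ℝ) u' 1 j *
        ∫ ω, ψ ω i x ⬝ᵥ χ ω j x' ∂P := by
  simp only [adBasis_dotProduct_adBasis]
  rw [integral_finsetSum _ fun i _ => integrable_finsetSum _ fun j _ => (hψχ i j).const_mul _]
  refine Finset.sum_congr rfl fun i _ => ?_
  rw [integral_finsetSum _ fun j _ => (hψχ i j).const_mul _]
  exact Finset.sum_congr rfl fun j _ => integral_const_mul _ _

theorem stmt_6_general {n m D : ℕ} (hD : 0 < D)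
    {Ω : Type*} [MeasurableSpace Ω] (P : Measure Ω) [IsProbabilityMeasure P]
    (θ : Fin (m + 1) → Fin D → Ω → (Fin n → ℝ))
    (μ : Fin (m + 1) → Measure (Fin n → ℝ))
    (hmeas : ∀ i l, Measurable (θ i l))
    (hdist : ∀ i l, Measure.map (θ i l) P = μ i)
    (hsym : ∀ i, Measure.map (fun t : Fin n → ℝ => -t) (μ i) = μ i)
    (hindep : ∀ i j l, i ≠ j → ProbabilityTheory.IndepFun (θ i l) (θ j l) P)
    (κ : Fin (m + 1) → (Fin n → ℝ) → ℝ)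
    (hκ : ∀ i v, κ i v = ∫ t, Real.cos (t ⬝ᵥ v) ∂(μ i))
    (x x' : Fin n → ℝ) (u u' : Fin m → ℝ) :
    (∫ ω, adBasis (fun i => rfBasis (fun l => θ i l ω)) x u ⬝ᵥ
        adBasis (fun i => rfBasis (fun l => θ i l ω)) x' u' ∂P)
      = adKernel κ x x' u u' := by
  have hlaw i l : HasLaw (θ i l) (μ i) P := ⟨(hmeas i l).aemeasurable, hdist i l⟩
  rw [integral_adBasis_dotProduct_adBasis (fun ω i => rfBasis (θ i · ω)) _ x x' u u'
    fun i j => integrable_rfBasis_dotProduct_rfBasis (fun l => (hmeas i l).aemeasurable)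
      (fun l => (hmeas j l).aemeasurable) x x', adKernel_eq_sum]
  refine Finset.sum_congr rfl fun i _ => Finset.sum_congr rfl fun j _ => congrArg _ ?_
  split_ifs with hij
  · subst hij
    rw [hκ]
    exact integral_rfBasis_dotProduct_rfBasis_self hD (hlaw i) x x'
  · have : (μ i).IsNegInvariant := ⟨hsym i⟩
    rw [hκ, hκ]
    exact integral_rfBasis_dotProduct_rfBasis_of_indepFun hD (hlaw i) (hlaw j)
      (fun l => hindep i j l hij) x x'

/-- if the weights `θ i l` of the random Fourier bases `ψᵢ` have symmetric
distributions `μ i` and `θ i l`, `θ j l` are independent for `i ≠ j`, then the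
expectation of the dot product of the AD compound random Fourier features equals the
AD compound kernel of `κᵢ(v) = ∫ cos(θᵀv) dμᵢ(θ)`. -/
theorem stmt_6 {n m D : ℕ} (hD : 0 < D)
    {Ω : Type*} [MeasurableSpace Ω] (P : Measure Ω) [IsProbabilityMeasure P]
    (θ : Fin (m + 1) → Fin D → Ω → (Fin n → ℝ))
    (μ : Fin (m + 1) → Measure (Fin n → ℝ))
    [∀ i, IsProbabilityMeasure (μ i)]
    (hmeas : ∀ i l, Measurable (θ i l))
    (hdist : ∀ i l, Measure.map (θ i l) P = μ i)
    (hsym : ∀ i, Measure.map (fun t : Fin n → ℝ => -t) (μ i) = μ i)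
    (hindep : ∀ i j l, i ≠ j → ProbabilityTheory.IndepFun (θ i l) (θ j l) P)
    (κ : Fin (m + 1) → (Fin n → ℝ) → ℝ)
    (hκ : ∀ i v, κ i v = ∫ t, Real.cos (t ⬝ᵥ v) ∂(μ i))
    (x x' : Fin n → ℝ) (u u' : Fin m → ℝ) :
    (∫ ω, adBasis (fun i => rfBasis (fun l => θ i l ω)) x u ⬝ᵥ
        adBasis (fun i => rfBasis (fun l => θ i l ω)) x' u' ∂P)
      = adKernel κ x x' u u' :=
  stmt_6_general hD P θ μ hmeas hdist hsym hindep κ hκ x x' u u'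
end

section
/- Let κ_1, …, κ_{m+1} : ℝ^n → ℝ and ψ_1, …, ψ_{m+1} : ℝ^n → ℝ^D be functions, and let ε ≥ 0. Suppose that for every i ∈ {1, …, m+1} and all x, x' ∈ ℝ^n, |κ_i(x − x') − ψ_i(x)ᵀψ_i(x')| ≤ ε. Let k_c be the ADP compound kernel of the kernels k_i(x,x') = κ_i(x − x'), and let φ_c be the ADP compound basis of ψ_1, …, ψ_{m+1}. Then for all x, x' ∈ ℝ^n and u, u' ∈ ℝ^m, |k_c((x,u),(x',u')) − φ_c(x,u)ᵀφ_c(x',u')| ≤ ε (∑_{i=1}^m |u_i| |u_i'| + 1). -/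
open Matrix

/-- if each individual random-feature approximation satisfies
`|κᵢ(x - x') - ψᵢ(x)ᵀψᵢ(x')| ≤ ε`, then the ADP compound approximation satisfies
`|k_c((x,u),(x',u')) - φ_c(x,u)ᵀφ_c(x',u')| ≤ ε (∑ᵢ |uᵢ| |uᵢ'| + 1)`. -/
theorem stmt_9 {n m D : ℕ} (κ : Fin (m + 1) → (Fin n → ℝ) → ℝ)
    (ψ : Fin (m + 1) → (Fin n → ℝ) → (Fin D → ℝ)) (ε : ℝ) (hε : 0 ≤ ε)
    (happrox : ∀ (i : Fin (m + 1)) (x x' : Fin n → ℝ),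
        |κ i (x - x') - ψ i x ⬝ᵥ ψ i x'| ≤ ε)
    (x x' : Fin n → ℝ) (u u' : Fin m → ℝ) :
    |adpKernel (fun i a b => κ i (a - b)) x x' u u' -
        adpBasis ψ x u ⬝ᵥ adpBasis ψ x' u'|
      ≤ ε * ((∑ i : Fin m, |u i| * |u' i|) + 1) := by

  set s := Fin.snoc (α := fun _ => ℝ) u 1 with hs
  set s' := Fin.snoc (α := fun _ => ℝ) u' 1 with hs'
  have hdot : adpBasis ψ x u ⬝ᵥ adpBasis ψ x' u'
      = ∑ i : Fin (m + 1), s i * s' i * (ψ i x ⬝ᵥ ψ i x') := by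
    simp only [adpBasis, dotProduct, Fintype.sum_prod_type, Finset.mul_sum]
    exact Finset.sum_congr rfl fun i _ => Finset.sum_congr rfl fun j _ => by ring
  have hker : adpKernel (fun i a b => κ i (a - b)) x x' u u'
      = ∑ i : Fin (m + 1), s i * s' i * κ i (x - x') := by
    rw [adpKernel, Fin.sum_univ_castSucc]
    simp [hs, hs']
  have key : adpKernel (fun i a b => κ i (a - b)) x x' u u'
      - adpBasis ψ x u ⬝ᵥ adpBasis ψ x' u'
      = ∑ i : Fin (m + 1), s i * s' i * (κ i (x - x') - ψ i x ⬝ᵥ ψ i x') := by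
    rw [hdot, hker, ← Finset.sum_sub_distrib]
    exact Finset.sum_congr rfl fun i _ => by ring
  rw [key]
  calc |∑ i : Fin (m + 1), s i * s' i * (κ i (x - x') - ψ i x ⬝ᵥ ψ i x')|
      ≤ ∑ i : Fin (m + 1), |s i * s' i * (κ i (x - x') - ψ i x ⬝ᵥ ψ i x')| :=
        Finset.abs_sum_le_sum_abs _ _
    _ ≤ ∑ i : Fin (m + 1), |s i| * |s' i| * ε := by
        refine Finset.sum_le_sum fun i _ => ?_
        rw [abs_mul, abs_mul]
        exact mul_le_mul_of_nonneg_left (happrox i x x')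
          (mul_nonneg (abs_nonneg _) (abs_nonneg _))
    _ = ε * ((∑ i : Fin m, |u i| * |u' i|) + 1) := by
        rw [Fin.sum_univ_castSucc]
        simp [hs, hs', Finset.mul_sum, mul_comm]
        rw [mul_add, mul_one, Finset.mul_sum]
end

section
/- Let k_1, …, k_{m+1} : ℝ^n × ℝ^n → ℝ each be a positive semidefinite kernel. Then the ADP compound kernel k_c of k_1, …, k_{m+1} is a positive semidefinite kernel on ℝ^n × ℝ^m: k_c is symmetric, and for every finite collection (x_1,u_1), …, (x_N,u_N) ∈ ℝ^n × ℝ^m and coefficients c ∈ ℝ^N, ∑_{a,b=1}^N c_a c_b k_c((x_a,u_a),(x_b,u_b)) ≥ 0. -/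
/-- if each `kᵢ` is a positive semidefinite kernel (symmetric with
nonnegative finite quadratic forms), then the ADP compound kernel of `k 0, …, k m`
is a positive semidefinite kernel on `ℝⁿ × ℝᵐ`. -/
theorem stmt_11 {n m : ℕ} (k : Fin (m + 1) → (Fin n → ℝ) → (Fin n → ℝ) → ℝ)
    (hsymm : ∀ (i : Fin (m + 1)) (x x' : Fin n → ℝ), k i x x' = k i x' x)
    (hpsd : ∀ (i : Fin (m + 1)) (N : ℕ) (xs : Fin N → Fin n → ℝ) (c : Fin N → ℝ),
        0 ≤ ∑ a, ∑ b, c a * c b * k i (xs a) (xs b)) :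
    (∀ (x x' : Fin n → ℝ) (u u' : Fin m → ℝ),
        adpKernel k x x' u u' = adpKernel k x' x u' u) ∧
      ∀ (N : ℕ) (xs : Fin N → Fin n → ℝ) (us : Fin N → Fin m → ℝ) (c : Fin N → ℝ),
        0 ≤ ∑ a, ∑ b, c a * c b * adpKernel k (xs a) (xs b) (us a) (us b) := by
  constructor
  · intro x x' u u'
    unfold adpKernel
    rw [hsymm (Fin.last m) x x']
    congr 1
    exact Finset.sum_congr rfl fun i _ => by rw [hsymm i.castSucc x x']; ring
  · intro N xs us c
    have key : ∑ a, ∑ b, c a * c b * adpKernel k (xs a) (xs b) (us a) (us b)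
        = (∑ i : Fin m, ∑ a, ∑ b,
            (c a * us a i) * (c b * us b i) * k i.castSucc (xs a) (xs b))
          + ∑ a, ∑ b, c a * c b * k (Fin.last m) (xs a) (xs b) := by
      unfold adpKernel
      simp only [mul_add, Finset.mul_sum, Finset.sum_add_distrib]
      congr 1
      trans (∑ a : Fin N, ∑ i : Fin m, ∑ b : Fin N,
          c a * c b * (us a i * us b i * k i.castSucc (xs a) (xs b)))
      · exact Finset.sum_congr rfl fun a _ => Finset.sum_comm
      trans (∑ i : Fin m, ∑ a : Fin N, ∑ b : Fin N,
          c a * c b * (us a i * us b i * k i.castSucc (xs a) (xs b)))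
      · exact Finset.sum_comm
      exact Finset.sum_congr rfl fun i _ => Finset.sum_congr rfl fun a _ =>
        Finset.sum_congr rfl fun b _ => by ring
    rw [key]
    have h1 : ∀ i : Fin m, 0 ≤ ∑ a, ∑ b,
        (c a * us a i) * (c b * us b i) * k i.castSucc (xs a) (xs b) :=
      fun i => hpsd i.castSucc N xs (fun a => c a * us a i)
    exact add_nonneg (Finset.sum_nonneg fun i _ => h1 i) (hpsd (Fin.last m) N xs c)
end

section
/- Let K and K̂ be real symmetric positive semidefinite N × N matrices, λ > 0, and z, k, k̂ ∈ ℝ^N. Then |zᵀ(K + λI)^{-1}k − zᵀ(K̂ + λI)^{-1}k̂| ≤ (‖z‖_2/λ) ‖k − k̂‖_2 + (‖z‖_2 ‖k‖_2 / λ²) ‖K − K̂‖_op, where ‖·‖_op denotes the matrix operator norm. -/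
open Matrix

/-- The Euclidean (ℓ²) norm of a vector in `ℝ^N`. -/
noncomputable def l2norm {N : ℕ} (v : Fin N → ℝ) : ℝ :=
  Real.sqrt (∑ i, v i ^ 2)

/-- The ℓ²-operator norm (largest singular value) of a real matrix. -/
noncomputable def matOpNorm {N M : ℕ} (A : Matrix (Fin N) (Fin M) ℝ) : ℝ :=
  ‖LinearMap.toContinuousLinearMap (Matrix.toEuclideanLin A)‖

/-!
Write `A = K + λI` and `B = K̂ + λI`. Positive semidefiniteness gives `⟪x, A x⟫ ≥ λ‖x‖²`, hence
`λ‖x‖ ≤ ‖A x‖` and `‖A⁻¹‖ ≤ λ⁻¹` in the ℓ² operator norm, and likewise for `B`. The resolvent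
identity `A⁻¹ - B⁻¹ = A⁻¹ (B - A) B⁻¹` splits the difference of posterior means into
`zᵀ B⁻¹ (k - k̂) + zᵀ A⁻¹ (K̂ - K) B⁻¹ k`; Cauchy–Schwarz and submultiplicativity of the
operator norm bound the two terms.
-/

open scoped Matrix.Norms.L2Operator RealInnerProductSpace

namespace Matrix.PosSemidef

variable {n : Type*} [DecidableEq n] {K : Matrix n n ℝ}

lemma posDef_add_smul_one (hK : K.PosSemidef) {lam : ℝ} (hlam : 0 < lam) :
    (K + lam • 1).PosDef :=
  PosDef.posSemidef_add hK (PosDef.one.smul hlam)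

variable [Fintype n]

lemma mul_norm_le_norm_toEuclideanCLM_add_smul_one (hK : K.PosSemidef) (lam : ℝ)
    (x : EuclideanSpace ℝ n) : lam * ‖x‖ ≤ ‖toEuclideanCLM (𝕜 := ℝ) (K + lam • 1) x‖ := by
  have hcoercive : lam * ‖x‖ ^ 2 ≤ ⟪x, toEuclideanCLM (𝕜 := ℝ) (K + lam • 1) x⟫ := by
    have hKx : 0 ≤ ⟪x, toEuclideanCLM (𝕜 := ℝ) K x⟫ := by
      simpa [inner_toEuclideanCLM] using hK.dotProduct_mulVec_nonneg x.ofLp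
    simp only [map_add, map_smul, map_one, _root_.add_apply, _root_.smul_apply, one_apply_eq_self,
      inner_add_right, real_inner_smul_right, real_inner_self_eq_norm_sq]
    linarith
  have hCS := hcoercive.trans (real_inner_le_norm _ _)
  rcases (norm_nonneg x).eq_or_lt with hx | hx
  · rw [← hx, mul_zero]
    exact norm_nonneg _
  · nlinarith

lemma norm_inv_add_smul_one_le (hK : K.PosSemidef) {lam : ℝ} (hlam : 0 < lam) :
    ‖(K + lam • 1)⁻¹‖ ≤ lam⁻¹ := by
  rw [cstar_norm_def]
  refine ContinuousLinearMap.opNorm_le_bound _ (inv_nonneg.2 hlam.le) fun v => ?_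
  rw [inv_mul_eq_div, le_div_iff₀' hlam]
  calc lam * ‖toEuclideanCLM (𝕜 := ℝ) (K + lam • 1)⁻¹ v‖
      ≤ ‖toEuclideanCLM (𝕜 := ℝ) (K + lam • 1) (toEuclideanCLM (𝕜 := ℝ) (K + lam • 1)⁻¹ v)‖ :=
        hK.mul_norm_le_norm_toEuclideanCLM_add_smul_one lam _
    _ = ‖v‖ := by
        rw [← mul_apply_eq_comp, ← map_mul, mul_nonsing_inv _ ((isUnit_iff_isUnit_det _).1
          (hK.posDef_add_smul_one hlam).isUnit), map_one, one_apply_eq_self]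

end Matrix.PosSemidef

variable {N M : ℕ}

lemma l2norm_eq_norm (v : Fin N → ℝ) : l2norm v = ‖WithLp.toLp 2 v‖ := by
  simp [l2norm, EuclideanSpace.norm_eq]

lemma l2norm_nonneg (v : Fin N → ℝ) : 0 ≤ l2norm v := Real.sqrt_nonneg _

lemma matOpNorm_eq_norm (A : Matrix (Fin N) (Fin M) ℝ) : matOpNorm A = ‖A‖ := rfl

lemma abs_dotProduct_mulVec_le (z : Fin N → ℝ) (A : Matrix (Fin N) (Fin M) ℝ) (v : Fin M → ℝ) :
    |z ⬝ᵥ A *ᵥ v| ≤ l2norm z * ‖A‖ * l2norm v := by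
  have hinner : z ⬝ᵥ A *ᵥ v = ⟪WithLp.toLp 2 z, WithLp.toLp 2 (A *ᵥ v)⟫ := by
    simp [EuclideanSpace.inner_eq_star_dotProduct, dotProduct_comm]
  rw [hinner, mul_assoc, l2norm_eq_norm, l2norm_eq_norm]
  exact (abs_real_inner_le_norm _ _).trans
    (mul_le_mul_of_nonneg_left (l2_opNorm_mulVec A (WithLp.toLp 2 v)) (norm_nonneg _))

lemma dotProduct_inv_mulVec_sub_inv_mulVec {n R : Type*} [Fintype n] [DecidableEq n] [CommRing R]
    {A B : Matrix n n R} (h : IsUnit A ↔ IsUnit B) (z k khat : n → R) :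
    z ⬝ᵥ A⁻¹ *ᵥ k - z ⬝ᵥ B⁻¹ *ᵥ khat =
      z ⬝ᵥ B⁻¹ *ᵥ (k - khat) + z ⬝ᵥ (A⁻¹ * (B - A) * B⁻¹) *ᵥ k := by
  rw [← inv_sub_inv h, sub_mulVec, mulVec_sub]
  simp only [dotProduct_sub]
  ring

/-- perturbation bound for the kernel-ridge posterior mean: for real
symmetric positive semidefinite `K, K̂`, `λ > 0` and vectors `z, k, k̂`,
`|zᵀ(K + λI)⁻¹k - zᵀ(K̂ + λI)⁻¹k̂| ≤ (‖z‖₂/λ) ‖k - k̂‖₂ + (‖z‖₂ ‖k‖₂/λ²) ‖K - K̂‖_op`. -/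
theorem stmt_13 {N : ℕ} (K Khat : Matrix (Fin N) (Fin N) ℝ)
    (hK : K.PosSemidef) (hKhat : Khat.PosSemidef)
    (lam : ℝ) (hlam : 0 < lam) (z k khat : Fin N → ℝ) :
    |z ⬝ᵥ (K + lam • (1 : Matrix (Fin N) (Fin N) ℝ))⁻¹.mulVec k -
        z ⬝ᵥ (Khat + lam • (1 : Matrix (Fin N) (Fin N) ℝ))⁻¹.mulVec khat|
      ≤ (l2norm z / lam) * l2norm (k - khat) +
        (l2norm z * l2norm k / lam ^ 2) * matOpNorm (K - Khat) := by
  set A := K + lam • (1 : Matrix (Fin N) (Fin N) ℝ)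
  set B := Khat + lam • (1 : Matrix (Fin N) (Fin N) ℝ)
  have hA : ‖A⁻¹‖ ≤ lam⁻¹ := hK.norm_inv_add_smul_one_le hlam
  have hB : ‖B⁻¹‖ ≤ lam⁻¹ := hKhat.norm_inv_add_smul_one_le hlam
  have hunits : IsUnit A ↔ IsUnit B :=
    iff_of_true (hK.posDef_add_smul_one hlam).isUnit (hKhat.posDef_add_smul_one hlam).isUnit
  have hBA : B - A = Khat - K := add_sub_add_right_eq_sub _ _ _
  have hdiff : ‖A⁻¹ * (Khat - K) * B⁻¹‖ ≤ lam⁻¹ * ‖K - Khat‖ * lam⁻¹ := by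
    rw [norm_sub_rev]
    refine norm_mul₃_le.trans ?_
    gcongr
  rw [dotProduct_inv_mulVec_sub_inv_mulVec hunits, hBA, matOpNorm_eq_norm]
  calc _ ≤ |z ⬝ᵥ B⁻¹ *ᵥ (k - khat)| + |z ⬝ᵥ (A⁻¹ * (Khat - K) * B⁻¹) *ᵥ k| := abs_add_le _ _
    _ ≤ l2norm z * ‖B⁻¹‖ * l2norm (k - khat) + l2norm z * ‖A⁻¹ * (Khat - K) * B⁻¹‖ * l2norm k :=
        add_le_add (abs_dotProduct_mulVec_le _ _ _) (abs_dotProduct_mulVec_le _ _ _)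
    _ ≤ l2norm z * lam⁻¹ * l2norm (k - khat) +
          l2norm z * (lam⁻¹ * ‖K - Khat‖ * lam⁻¹) * l2norm k := by
        gcongr <;> exact l2norm_nonneg _
    _ = _ := by ring
end
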